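/- arXiv:2510.10972 — 7 statements merged into one kernel-verified Lean document; each statement's English description precedes it below -/
import Mathlib

section
/- For m = n ≥ 2, the biquadratic tensor A = Σ_{p=1}^m e_p ⊗ e_p ⊗ e_p ⊗ e_p (where e_p are the standard basis vectors of ℝ^m) is strongly completely positive but not positive definite: indeed A e_1 e_2 e_1 e_2 = 0. -/
/-!
Both factors of the CP decomposition can be taken to be the standard basis `e_1, …, e_m`,
which is nonnegative and spans `ℝ^m`. On the other hand, the biquadratic form of any tensor
at `(e_s, e_t)` is the entry `a_{stst}`, and for the diagonal tensor this vanishes when `s ≠ t`.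
-/

open Finset Submodule

def IsStronglyCompletelyPositive {m n : ℕ} (a : Fin m → Fin n → Fin m → Fin n → ℝ) : Prop :=
  ∃ (r : ℕ) (u : Fin r → Fin m → ℝ) (v : Fin r → Fin n → ℝ),
    (∀ p i, 0 ≤ u p i) ∧ (∀ p j, 0 ≤ v p j) ∧
    (∀ i j k l, a i j k l = ∑ p, u p i * v p j * u p k * v p l) ∧
    span ℝ (Set.range u) = ⊤ ∧ span ℝ (Set.range v) = ⊤

section StandardBasis

variable {ι R : Type*} [Fintype ι] [DecidableEq ι] [Semiring R]

theorem sum_single_mul_single_mul_single_mul_single (i j k l : ι) :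
    ∑ p, (Pi.single p 1 : ι → R) i * (Pi.single p 1 : ι → R) j *
      (Pi.single p 1 : ι → R) k * (Pi.single p 1 : ι → R) l =
      if i = j ∧ j = k ∧ k = l then 1 else 0 := by
  rw [sum_eq_single i (fun p _ hp => by simp [Pi.single_apply, Ne.symm hp]) (by simp)]
  simp only [Pi.single_apply]
  grind

theorem span_range_single_one :
    span R (Set.range fun p => (Pi.single p 1 : ι → R)) = ⊤ := by
  simpa only [← Pi.basisFun_apply] using (Pi.basisFun R ι).span_eq

theorem sum_mul_single_mul_single_mul_single_mul_single (a : ι → ι → ι → ι → R) (s t : ι) :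
    ∑ i, ∑ j, ∑ k, ∑ l, a i j k l * (Pi.single s 1 : ι → R) i *
      (Pi.single t 1 : ι → R) j * (Pi.single s 1 : ι → R) k * (Pi.single t 1 : ι → R) l =
        a s t s t := by
  simp [Pi.single_apply]

theorem not_forall_pos_sum_mul_of_eq_zero [Preorder R] [Nontrivial R]
    (a : ι → ι → ι → ι → R) {s t : ι} (h : a s t s t = 0) :
    ¬ ∀ x y : ι → R, x ≠ 0 → y ≠ 0 →
        0 < ∑ i, ∑ j, ∑ k, ∑ l, a i j k l * x i * y j * x k * y l := by
  intro hpos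
  have := hpos (Pi.single s 1) (Pi.single t 1)
    (Pi.single_ne_zero_iff.2 one_ne_zero) (Pi.single_ne_zero_iff.2 one_ne_zero)
  rw [sum_mul_single_mul_single_mul_single_mul_single, h] at this
  exact this.false

end StandardBasis

theorem isStronglyCompletelyPositive_diagonal (m : ℕ) :
    IsStronglyCompletelyPositive
      (fun i j k l : Fin m => if i = j ∧ j = k ∧ k = l then (1 : ℝ) else 0) := by
  have hnonneg : ∀ (p i : Fin m), 0 ≤ (Pi.single p 1 : Fin m → ℝ) i :=
    fun _ => (Pi.single_nonneg (α := fun _ => ℝ)).2 zero_le_one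
  exact ⟨m, fun p => Pi.single p 1, fun p => Pi.single p 1, hnonneg, hnonneg,
    fun i j k l => (sum_single_mul_single_mul_single_mul_single i j k l).symm,
    span_range_single_one, span_range_single_one⟩

/-- the diagonal tensor `∑_p e_p ⊗ e_p ⊗ e_p ⊗ e_p` (m = n ≥ 2) is
strongly completely positive but not positive definite; indeed its biquadratic
form vanishes at (e_1, e_2). -/
theorem diagonal_tensor_strongly_cpb_not_pd {m : ℕ} (hm : 2 ≤ m)
    (a : Fin m → Fin m → Fin m → Fin m → ℝ)
    (ha : ∀ i j k l, a i j k l = if i = j ∧ j = k ∧ k = l then 1 else 0) :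
    (∃ (r : ℕ) (u : Fin r → Fin m → ℝ) (v : Fin r → Fin m → ℝ),
      (∀ p i, 0 ≤ u p i) ∧ (∀ p j, 0 ≤ v p j) ∧
      (∀ i j k l, a i j k l = ∑ p, u p i * v p j * u p k * v p l) ∧
      Submodule.span ℝ (Set.range u) = ⊤ ∧ Submodule.span ℝ (Set.range v) = ⊤) ∧
    (∑ i, ∑ j, ∑ k, ∑ l, a i j k l *
        (Pi.single (⟨0, by omega⟩ : Fin m) (1:ℝ) : Fin m → ℝ) i *
        (Pi.single (⟨1, by omega⟩ : Fin m) (1:ℝ) : Fin m → ℝ) j *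
        (Pi.single (⟨0, by omega⟩ : Fin m) (1:ℝ) : Fin m → ℝ) k *
        (Pi.single (⟨1, by omega⟩ : Fin m) (1:ℝ) : Fin m → ℝ) l) = 0 ∧
    ¬ (∀ (x y : Fin m → ℝ), x ≠ 0 → y ≠ 0 →
        0 < ∑ i, ∑ j, ∑ k, ∑ l, a i j k l * x i * y j * x k * y l) := by
  have hentry : a ⟨0, by omega⟩ ⟨1, by omega⟩ ⟨0, by omega⟩ ⟨1, by omega⟩ = 0 := by simp [ha]
  obtain rfl : a = fun i j k l => if i = j ∧ j = k ∧ k = l then 1 else 0 := by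
    ext i j k l; exact ha i j k l
  exact ⟨isStronglyCompletelyPositive_diagonal m,
    (sum_mul_single_mul_single_mul_single_mul_single _ _ _).trans hentry,
    not_forall_pos_sum_mul_of_eq_zero _ hentry⟩
end

section
/- The biquadratic form of the tensor given by A x y x y = (x_1 y_2 + x_2 y_1)^2 is a sum of squares of bilinear forms, but this tensor is not weakly completely positive: there is no decomposition a_{ijkl} = Σ_{p=1}^r u_i^{(p)} v_j^{(p)} u_k^{(p)} v_l^{(p)} with real vectors u^{(p)}, v^{(p)} ∈ ℝ^2. -/
def IsWeaklyCompletelyPositive {ι κ : Type*} (a : ι → κ → ι → κ → ℝ) : Prop :=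
  ∃ (r : ℕ) (u : Fin r → ι → ℝ) (v : Fin r → κ → ℝ),
    ∀ i j k l, a i j k l = ∑ p, u p i * v p j * u p k * v p l

/-- `a i j i j = ∑ p (u p i * v p j) ^ 2`, so a zero there kills every `u p i * v p j`,
and each term of `a i l k j` contains that factor. -/
theorem IsWeaklyCompletelyPositive.apply_eq_zero_of_apply_self_eq_zero {ι κ : Type*}
    {a : ι → κ → ι → κ → ℝ} (ha : IsWeaklyCompletelyPositive a) {i : ι} {j : κ}
    (hij : a i j i j = 0) (k : ι) (l : κ) : a i l k j = 0 := by
  obtain ⟨r, u, v, hdecomp⟩ := ha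
  have hsq : ∑ p, (u p i * v p j) ^ 2 = 0 := by
    rw [← hij, hdecomp]
    exact Finset.sum_congr rfl fun p _ => by ring
  have hzero (p : Fin r) : u p i * v p j = 0 :=
    pow_eq_zero_iff two_ne_zero |>.mp <|
      (Finset.sum_eq_zero_iff_of_nonneg fun p _ => sq_nonneg _).mp hsq p (Finset.mem_univ p)
  rw [hdecomp]
  exact Finset.sum_eq_zero fun p _ => by linear_combination (u p k * v p l) * hzero p

/-- the SOS biquadratic tensor with form `(x₁y₂ + x₂y₁)²` is not
weakly completely positive. -/
theorem sos_not_weakly_cpb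
    (a : Fin 2 → Fin 2 → Fin 2 → Fin 2 → ℝ)
    (ha : ∀ i j k l, a i j k l = if i ≠ j ∧ k ≠ l then 1 else 0) :
    (∀ (x y : Fin 2 → ℝ),
      (∑ i, ∑ j, ∑ k, ∑ l, a i j k l * x i * y j * x k * y l)
        = (x 0 * y 1 + x 1 * y 0) ^ 2) ∧
    ¬ (∃ (r : ℕ) (u : Fin r → Fin 2 → ℝ) (v : Fin r → Fin 2 → ℝ),
        ∀ i j k l, a i j k l = ∑ p, u p i * v p j * u p k * v p l) := by
  refine ⟨fun x y => ?_, fun hwcp => ?_⟩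
  · simp only [ha, ne_eq, ite_mul, one_mul, zero_mul, Fin.sum_univ_two, Fin.isValue,
      not_true_eq_false, and_false, ↓reduceIte, zero_ne_one, not_false_eq_true, and_true, ite_not,
      zero_add, one_ne_zero, add_zero]
    ring
  · have h0110 : a 0 1 1 0 = 0 :=
      IsWeaklyCompletelyPositive.apply_eq_zero_of_apply_self_eq_zero hwcp (by simp [ha]) 1 1
    simp [ha] at h0110
end

section
/- If B ∈ ℝ^{m×m} and C ∈ ℝ^{n×n} are completely positive matrices, then the biquadratic tensor A with a_{ijkl} = b_{ik} c_{jl} is completely positive biquadratic: it admits a decomposition a_{ijkl} = Σ_{t=1}^R (x_t)_i (y_t)_j (x_t)_k (y_t)_l with nonnegative vectors x_t ∈ ℝ^m_+, y_t ∈ ℝ^n_+. -/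
open scoped BigOperators

theorem Fin.sum_mul_sum_eq_sum_finProdFinEquiv {R : Type*} [CommSemiring R] {a b : ℕ}
    (f : Fin a → R) (g : Fin b → R) :
    (∑ p, f p) * (∑ q, g q) =
      ∑ t : Fin (a * b), f (finProdFinEquiv.symm t).1 * g (finProdFinEquiv.symm t).2 := by
  rw [Fintype.sum_mul_sum, ← Fintype.sum_prod_type',
    finProdFinEquiv.symm.sum_comp (fun pq => f pq.1 * g pq.2)]

/-- the outer product of two completely positive matrices is a
completely positive biquadratic tensor. -/
theorem outer_product_of_cp_matrices_is_cpb {m n rB rC : ℕ}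
    (b : Fin m → Fin m → ℝ) (c : Fin n → Fin n → ℝ)
    (u : Fin rB → Fin m → ℝ) (v : Fin rC → Fin n → ℝ)
    (hu : ∀ p i, 0 ≤ u p i) (hv : ∀ q j, 0 ≤ v q j)
    (hb : ∀ i k, b i k = ∑ p, u p i * u p k)
    (hc : ∀ j l, c j l = ∑ q, v q j * v q l) :
    ∃ (R : ℕ) (xs : Fin R → Fin m → ℝ) (ys : Fin R → Fin n → ℝ),
      (∀ t i, 0 ≤ xs t i) ∧ (∀ t j, 0 ≤ ys t j) ∧
      (∀ i j k l, b i k * c j l = ∑ t, xs t i * ys t j * xs t k * ys t l) := by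
  refine ⟨rB * rC, fun t => u (finProdFinEquiv.symm t).1, fun t => v (finProdFinEquiv.symm t).2,
    fun t i => hu _ i, fun t j => hv _ j, fun i j k l => ?_⟩
  rw [hb, hc, Fin.sum_mul_sum_eq_sum_finProdFinEquiv]
  exact Finset.sum_congr rfl fun t _ => by ring
end

section
/- Let A be an m × n biquadratic Cauchy tensor with generating vectors c ∈ ℝ^m, d ∈ ℝ^n, i.e., a_{ijkl} = 1/(c_i + c_k + d_j + d_l). If A is strictly copositive, then c_i + d_j > 0 for all i ∈ [m], j ∈ [n], and hence c_i + c_k + d_j + d_l > 0 for all i, k ∈ [m], j, l ∈ [n]. -/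
/-!
Testing the biquadratic form of a strictly copositive tensor on a pair of standard basis
vectors `eᵢ, eⱼ` isolates its diagonal entry `a_{ijij}`, which must therefore be positive.
For the Cauchy tensor this entry is `1 / (2 (cᵢ + dⱼ))`, so `cᵢ + dⱼ > 0`, and every
denominator `cᵢ + cₖ + dⱼ + dₗ = (cᵢ + dⱼ) + (cₖ + dₗ)` is positive as well.
-/

variable {ι κ R : Type*}

def biquadraticCauchyTensor [DivisionRing R] (c : ι → R) (d : κ → R) (i : ι) (j : κ) (k : ι)
    (l : κ) : R :=
  1 / (c i + c k + d j + d l)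

theorem biquadraticCauchyTensor_diag_pos_iff [Field R] [LinearOrder R] [IsStrictOrderedRing R]
    (c : ι → R) (d : κ → R) (i : ι) (j : κ) :
    0 < biquadraticCauchyTensor c d i j i j ↔ 0 < c i + d j := by
  rw [biquadraticCauchyTensor, one_div_pos]
  constructor <;> intro h <;> linarith

section Fintype

variable [Fintype ι] [Fintype κ]

def biquadraticForm [Semiring R] (A : ι → κ → ι → κ → R) (x : ι → R) (y : κ → R) : R :=
  ∑ i, ∑ j, ∑ k, ∑ l, A i j k l * x i * y j * x k * y l

def IsStrictlyCopositive [Semiring R] [PartialOrder R] (A : ι → κ → ι → κ → R) : Prop :=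
  ∀ (x : ι → R) (y : κ → R), (∀ i, 0 ≤ x i) → x ≠ 0 → (∀ j, 0 ≤ y j) → y ≠ 0 →
    0 < biquadraticForm A x y

theorem biquadraticForm_single_single [Semiring R] [DecidableEq ι] [DecidableEq κ]
    (A : ι → κ → ι → κ → R) (i : ι) (j : κ) :
    biquadraticForm A (Pi.single i 1) (Pi.single j 1) = A i j i j := by
  simp [biquadraticForm, Pi.single_apply]

theorem IsStrictlyCopositive.diag_pos [Semiring R] [PartialOrder R] [ZeroLEOneClass R]
    [NeZero (1 : R)] {A : ι → κ → ι → κ → R} (hA : IsStrictlyCopositive A) (i : ι) (j : κ) :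
    0 < A i j i j := by
  classical
  have hx : (Pi.single i 1 : ι → R) ≠ 0 := Pi.single_ne_zero_iff.mpr one_ne_zero
  have hy : (Pi.single j 1 : κ → R) ≠ 0 := Pi.single_ne_zero_iff.mpr one_ne_zero
  simpa only [biquadraticForm_single_single] using
    hA _ _ (Pi.single_nonneg.mpr zero_le_one) hx (Pi.single_nonneg.mpr zero_le_one) hy

end Fintype

theorem cauchy_strictly_copositive_implies_positive_general {m n : ℕ}
    (c : Fin m → ℝ) (d : Fin n → ℝ)
    (hsc : ∀ (x : Fin m → ℝ) (y : Fin n → ℝ),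
      (∀ i, 0 ≤ x i) → x ≠ 0 → (∀ j, 0 ≤ y j) → y ≠ 0 →
      0 < ∑ i, ∑ j, ∑ k, ∑ l,
        (1 / (c i + c k + d j + d l)) * x i * y j * x k * y l) :
    (∀ (i : Fin m) (j : Fin n), 0 < c i + d j) ∧
    (∀ (i k : Fin m) (j l : Fin n), 0 < c i + c k + d j + d l) := by
  have hA : IsStrictlyCopositive (biquadraticCauchyTensor c d) := hsc
  have hpos (i : Fin m) (j : Fin n) : 0 < c i + d j :=
    (biquadraticCauchyTensor_diag_pos_iff c d i j).mp (hA.diag_pos i j)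
  refine ⟨hpos, fun i k j l => ?_⟩
  linarith [hpos i j, hpos k l]

/-- if a biquadratic Cauchy tensor is strictly copositive, then
`c_i + d_j > 0` for all `i, j`, hence all denominators are positive. -/
theorem cauchy_strictly_copositive_implies_positive {m n : ℕ}
    (c : Fin m → ℝ) (d : Fin n → ℝ)
    (hwell : ∀ (i k : Fin m) (j l : Fin n), c i + c k + d j + d l ≠ 0)
    (hsc : ∀ (x : Fin m → ℝ) (y : Fin n → ℝ),
      (∀ i, 0 ≤ x i) → x ≠ 0 → (∀ j, 0 ≤ y j) → y ≠ 0 →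
      0 < ∑ i, ∑ j, ∑ k, ∑ l,
        (1 / (c i + c k + d j + d l)) * x i * y j * x k * y l) :
    (∀ (i : Fin m) (j : Fin n), 0 < c i + d j) ∧
    (∀ (i k : Fin m) (j l : Fin n), 0 < c i + c k + d j + d l) :=
  cauchy_strictly_copositive_implies_positive_general c d hsc
end

section
/- Let c ∈ ℝ^m, d ∈ ℝ^n with c_i + c_k + d_j + d_l > 0 for all i, k, j, l, and let a_{ijkl} = 1/(c_i + c_k + d_j + d_l). Then for all x ∈ ℝ^m, y ∈ ℝ^n, A x y x y = ∫_0^∞ (Σ_i e^{-c_i s} x_i)^2 (Σ_j e^{-d_j s} y_j)^2 ds. -/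
/-!
Expanding the squares writes the integrand as a finite combination of exponentials
`x_i y_j x_k y_l e^{-(c_i + c_k + d_j + d_l) s}`, each with a positive rate. Integrating term by
term and using `∫_0^∞ e^{-α s} ds = 1/α` for `α > 0` recovers the biquadratic form.
-/

open scoped BigOperators
open MeasureTheory Real

theorem integral_Ioi_exp_neg_mul {b : ℝ} (hb : 0 < b) :
    ∫ s in Set.Ioi (0:ℝ), exp (-b * s) = 1 / b := by
  rw [integral_exp_mul_Ioi (neg_lt_zero.mpr hb), mul_zero, exp_zero, neg_div_neg_eq]

theorem integral_Ioi_sum_mul_exp_neg_mul {ι : Type*} [Fintype ι] (w b : ι → ℝ)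
    (hb : ∀ p, 0 < b p) :
    ∫ s in Set.Ioi (0:ℝ), ∑ p, w p * exp (-b p * s) = ∑ p, w p / b p := by
  rw [integral_finsetSum _ fun p _ => (exp_neg_integrableOn_Ioi 0 (hb p)).const_mul (w p)]
  refine Finset.sum_congr rfl fun p _ => ?_
  rw [integral_const_mul, integral_Ioi_exp_neg_mul (hb p), mul_one_div]

theorem sum_sq_mul_sum_sq_eq_sum_sum_sum_sum {R ι κ : Type*} [CommSemiring R] [Fintype ι]
    [Fintype κ] (f : ι → R) (g : κ → R) :
    (∑ i, f i) ^ 2 * (∑ j, g j) ^ 2 = ∑ i : ι, ∑ j : κ, ∑ k : ι, ∑ l : κ, f i * g j * f k * g l := by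
  rw [← mul_pow, Finset.sum_mul_sum, sq]
  simp only [Finset.sum_mul]
  simp only [Finset.mul_sum, mul_assoc]

/-- integral representation of the biquadratic form of a
positive biquadratic Cauchy tensor. -/
theorem cauchy_form_integral_representation {m n : ℕ}
    (c : Fin m → ℝ) (d : Fin n → ℝ)
    (hpos : ∀ (i k : Fin m) (j l : Fin n), 0 < c i + c k + d j + d l)
    (x : Fin m → ℝ) (y : Fin n → ℝ) :
    (∑ i, ∑ j, ∑ k, ∑ l,
        (1 / (c i + c k + d j + d l)) * x i * y j * x k * y l)
      = ∫ s in Set.Ioi (0:ℝ),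
          (∑ i, Real.exp (-(c i) * s) * x i) ^ 2 *
          (∑ j, Real.exp (-(d j) * s) * y j) ^ 2 := by
  let w : Fin m × Fin n × Fin m × Fin n → ℝ := fun ⟨i, j, k, l⟩ => x i * y j * x k * y l
  let b : Fin m × Fin n × Fin m × Fin n → ℝ := fun ⟨i, j, k, l⟩ => c i + c k + d j + d l
  have hintegrand : ∀ s : ℝ, (∑ i, exp (-(c i) * s) * x i) ^ 2 *
      (∑ j, exp (-(d j) * s) * y j) ^ 2 = ∑ p, w p * exp (-b p * s) := by
    intro s
    simp only [sum_sq_mul_sum_sq_eq_sum_sum_sum_sum, Fintype.sum_prod_type, w, b, neg_add, add_mul,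
      exp_add]
    congr! 4 with i j k l
    ring
  simp_rw [hintegrand]
  rw [integral_Ioi_sum_mul_exp_neg_mul w b fun ⟨i, j, k, l⟩ => hpos i k j l]
  simp only [Fintype.sum_prod_type, w, b]
  congr! 4 with i j k l
  ring
end

section
/- Let c ∈ ℝ^m, d ∈ ℝ^n satisfy c_i + d_j > 0 for all i ∈ [m], j ∈ [n], and let a_{ijkl} = 1/(c_i + c_k + d_j + d_l). Then A is strictly copositive: for all nonzero x ∈ ℝ^m_+ and nonzero y ∈ ℝ^n_+, Σ_{i,j,k,l} a_{ijkl} x_i y_j x_k y_l > 0. -/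
/-!
All entries `1 / (c i + c k + d j + d l)` are positive, so the biquadratic form of a
nonnegative pair `x, y` is a sum of nonnegative terms; choosing `x i₀ > 0` and `y j₀ > 0`,
the diagonal term at `(i₀, j₀, i₀, j₀)` is positive.
-/

open Finset

lemma exists_pos_of_nonneg_of_ne_zero {ι R : Type*} [Zero R] [PartialOrder R] {x : ι → R}
    (hx : ∀ i, 0 ≤ x i) (hx0 : x ≠ 0) : ∃ i, 0 < x i :=
  (Pi.lt_def.1 (lt_of_le_of_ne hx (Ne.symm hx0))).2

lemma biquadratic_form_pos_of_nonneg_of_diag_pos {ι κ R : Type*} [Fintype ι] [Fintype κ]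
    [Semiring R] [PartialOrder R] [IsStrictOrderedRing R] (a : ι → κ → ι → κ → R)
    (ha : ∀ i j k l, 0 ≤ a i j k l) (hdiag : ∀ i j, 0 < a i j i j)
    {x : ι → R} {y : κ → R} (hx : ∀ i, 0 ≤ x i) (hx0 : x ≠ 0)
    (hy : ∀ j, 0 ≤ y j) (hy0 : y ≠ 0) :
    0 < ∑ i, ∑ j, ∑ k, ∑ l, a i j k l * x i * y j * x k * y l := by
  obtain ⟨i₀, hi₀⟩ := exists_pos_of_nonneg_of_ne_zero hx hx0
  obtain ⟨j₀, hj₀⟩ := exists_pos_of_nonneg_of_ne_zero hy hy0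
  have hterm : ∀ i j k l, 0 ≤ a i j k l * x i * y j * x k * y l := fun i j k l => by
    have := ha i j k l; have := hx i; have := hy j; have := hx k; have := hy l
    positivity
  refine sum_pos' (fun i _ => sum_nonneg fun j _ => sum_nonneg fun k _ =>
    sum_nonneg fun l _ => hterm i j k l) ⟨i₀, mem_univ _, ?_⟩
  refine sum_pos' (fun j _ => sum_nonneg fun k _ =>
    sum_nonneg fun l _ => hterm i₀ j k l) ⟨j₀, mem_univ _, ?_⟩
  refine sum_pos' (fun k _ => sum_nonneg fun l _ => hterm i₀ j₀ k l) ⟨i₀, mem_univ _, ?_⟩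
  refine sum_pos' (fun l _ => hterm i₀ j₀ i₀ l) ⟨j₀, mem_univ _, ?_⟩
  have := hdiag i₀ j₀
  positivity

/-- a biquadratic Cauchy tensor with `c_i + d_j > 0` for all
`i, j` is strictly copositive. -/
theorem cauchy_positive_implies_strictly_copositive {m n : ℕ}
    (c : Fin m → ℝ) (d : Fin n → ℝ)
    (hpos : ∀ (i : Fin m) (j : Fin n), 0 < c i + d j) :
    ∀ (x : Fin m → ℝ) (y : Fin n → ℝ),
      (∀ i, 0 ≤ x i) → x ≠ 0 → (∀ j, 0 ≤ y j) → y ≠ 0 →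
      0 < ∑ i, ∑ j, ∑ k, ∑ l,
        (1 / (c i + c k + d j + d l)) * x i * y j * x k * y l := by
  have hentry : ∀ i j k l, 0 < 1 / (c i + c k + d j + d l) := fun i j k l => by
    have := hpos i j; have := hpos k l
    exact one_div_pos.2 (by linarith)
  intro x y hx hx0 hy hy0
  exact biquadratic_form_pos_of_nonneg_of_diag_pos _ (fun i j k l => (hentry i j k l).le)
    (fun i j => hentry i j i j) hx hx0 hy hy0
end

section
/- The m × n biquadratic Pascal tensor P with p_{ijkl} = (i+j+k+l−4)! / ((i−1)!(j−1)!(k−1)!(l−1)!) is positive definite: for all nonzero x ∈ ℝ^m and nonzero y ∈ ℝ^n, Σ_{i,k=1}^m Σ_{j,l=1}^n p_{ijkl} x_i y_j x_k y_l > 0. -/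
/-!
With `φ(t) = ∑ᵢ xᵢ tⁱ / i!` and `ψ(t) = ∑ⱼ yⱼ tʲ / j!`, the Gamma integral `∫₀^∞ tᵏ e⁻ᵗ dt = k!`
turns the biquadratic form into `∫₀^∞ (φ(t) ψ(t))² e⁻ᵗ dt`. For nonzero `x` and `y` the product
`φ ψ` is a nonzero polynomial, so it vanishes at only finitely many points and the integral is
positive.
-/

open MeasureTheory Real Set Polynomial
open scoped Nat ENNReal

lemma integrableOn_pow_mul_exp_neg_Ioi (k : ℕ) :
    IntegrableOn (fun t : ℝ => t ^ k * exp (-t)) (Ioi 0) := by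
  refine (GammaIntegral_convergent (s := k + 1) (by positivity)).congr_fun
    (fun t _ => ?_) measurableSet_Ioi
  dsimp only
  rw [add_sub_cancel_right, rpow_natCast, mul_comm]

lemma integral_pow_mul_exp_neg_Ioi (k : ℕ) :
    ∫ t in Ioi (0 : ℝ), t ^ k * exp (-t) = k ! := by
  rw [← Gamma_nat_eq_factorial, Gamma_eq_integral (by positivity)]
  refine setIntegral_congr_fun measurableSet_Ioi (fun t _ => ?_)
  rw [add_sub_cancel_right, rpow_natCast, mul_comm]

section Moments

variable {ι : Type*} (s : Finset ι) (c : ι → ℝ) (d : ι → ℕ)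

lemma integrableOn_sum_pow_mul_exp_neg_Ioi :
    IntegrableOn (fun t : ℝ => (∑ q ∈ s, c q * t ^ d q) * exp (-t)) (Ioi 0) := by
  simp_rw [Finset.sum_mul, mul_assoc]
  exact integrable_finsetSum _ fun q _ => (integrableOn_pow_mul_exp_neg_Ioi (d q)).const_mul (c q)

lemma integral_sum_pow_mul_exp_neg_Ioi :
    ∫ t in Ioi (0 : ℝ), (∑ q ∈ s, c q * t ^ d q) * exp (-t) = ∑ q ∈ s, c q * (d q)! := by
  simp_rw [Finset.sum_mul, mul_assoc]
  rw [integral_finsetSum _ fun q _ =>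
    (integrableOn_pow_mul_exp_neg_Ioi (d q)).const_mul (c q)]
  simp_rw [integral_const_mul, integral_pow_mul_exp_neg_Ioi]

end Moments

lemma integrableOn_eval_mul_exp_neg_Ioi (p : ℝ[X]) :
    IntegrableOn (fun t => p.eval t * exp (-t)) (Ioi 0) := by
  simp_rw [eval_eq_sum_range]
  exact integrableOn_sum_pow_mul_exp_neg_Ioi _ p.coeff id

lemma integral_sq_eval_mul_exp_neg_pos {p : ℝ[X]} (hp : p ≠ 0) :
    0 < ∫ t in Ioi (0 : ℝ), p.eval t ^ 2 * exp (-t) := by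
  have hint : IntegrableOn (fun t => p.eval t ^ 2 * exp (-t)) (Ioi 0) := by
    refine (integrableOn_eval_mul_exp_neg_Ioi (p ^ 2)).congr_fun (fun t _ => ?_) measurableSet_Ioi
    dsimp only
    rw [eval_pow]
  rw [setIntegral_pos_iff_support_of_nonneg_ae (ae_of_all _ fun t => by positivity) hint]
  have hroots : volume {t : ℝ | p.IsRoot t} = 0 := (finite_setOfPred_isRoot hp).measure_zero _
  calc (0 : ℝ≥0∞) < volume (Ioi (0 : ℝ) \ {t | p.IsRoot t}) := by
        rw [measure_sdiff_null hroots, volume_Ioi]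
        exact ENNReal.zero_lt_top
    _ ≤ _ := measure_mono fun t ht =>
      show t ∈ Function.support _ ∩ Ioi 0 from ⟨by simpa [IsRoot] using ht.2, ht.1⟩

noncomputable def expGenPoly {m : ℕ} (x : Fin m → ℝ) : ℝ[X] :=
  ∑ i, C (x i / i.1 !) * X ^ i.1

lemma eval_expGenPoly {m : ℕ} (x : Fin m → ℝ) (t : ℝ) :
    (expGenPoly x).eval t = ∑ i, x i / i.1 ! * t ^ i.1 := by
  simp [expGenPoly, eval_finsetSum]

lemma coeff_expGenPoly {m : ℕ} (x : Fin m → ℝ) (i : Fin m) :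
    (expGenPoly x).coeff i = x i / i.1 ! := by
  rw [expGenPoly, finsetSum_coeff, Finset.sum_eq_single i]
  · simp
  · intro j _ hji
    rw [coeff_C_mul_X_pow, if_neg (fun h => hji (Fin.ext h.symm))]
  · simp

lemma expGenPoly_ne_zero {m : ℕ} {x : Fin m → ℝ} (hx : x ≠ 0) : expGenPoly x ≠ 0 := by
  obtain ⟨i, hi⟩ := Function.ne_iff.mp hx
  intro h
  have hcoeff := coeff_expGenPoly x i
  rw [h, coeff_zero, eq_comm, div_eq_zero_iff] at hcoeff
  exact hcoeff.elim hi (Nat.cast_ne_zero.mpr (Nat.factorial_ne_zero _))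

/-- the biquadratic Pascal tensor is positive definite. -/
theorem pascal_positive_definite {m n : ℕ}
    (x : Fin m → ℝ) (y : Fin n → ℝ) (hx : x ≠ 0) (hy : y ≠ 0) :
    0 < ∑ i, ∑ j, ∑ k, ∑ l,
      ((Nat.factorial (i.1 + j.1 + k.1 + l.1) : ℝ) /
          ((Nat.factorial i.1 : ℝ) * (Nat.factorial j.1) *
            (Nat.factorial k.1) * (Nat.factorial l.1)))
        * x i * y j * x k * y l := by
  let c : Fin m × Fin n × Fin m × Fin n → ℝ := fun q =>
    x q.1 * y q.2.1 * x q.2.2.1 * y q.2.2.2 /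
      (q.1.1 ! * q.2.1.1 ! * q.2.2.1.1 ! * q.2.2.2.1 !)
  let d : Fin m × Fin n × Fin m × Fin n → ℕ := fun q => q.1 + q.2.1 + q.2.2.1 + q.2.2.2
  have hsquare (t : ℝ) :
      ((expGenPoly x * expGenPoly y).eval t) ^ 2 = ∑ q, c q * t ^ d q := by
    -- this bracketing makes the expanded sums come out in the order `i, j, k, l` of `c`
    rw [eval_mul, show ∀ a b : ℝ, (a * b) ^ 2 = a * (b * (a * b)) from fun a b => by ring]
    simp only [eval_expGenPoly, Fintype.sum_mul_sum]
    simp only [Finset.mul_sum, Fintype.sum_prod_type, c, d]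
    refine Fintype.sum_congr _ _ fun i => Fintype.sum_congr _ _ fun j =>
      Fintype.sum_congr _ _ fun k => Fintype.sum_congr _ _ fun l => by ring
  calc 0 < ∫ t in Ioi (0 : ℝ), ((expGenPoly x * expGenPoly y).eval t) ^ 2 * exp (-t) :=
        integral_sq_eval_mul_exp_neg_pos
          (mul_ne_zero (expGenPoly_ne_zero hx) (expGenPoly_ne_zero hy))
    _ = ∑ q, c q * (d q)! := by simp_rw [hsquare, integral_sum_pow_mul_exp_neg_Ioi]
    _ = _ := by
      simp only [Fintype.sum_prod_type, c, d]
      refine Fintype.sum_congr _ _ fun i => Fintype.sum_congr _ _ fun j =>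
        Fintype.sum_congr _ _ fun k => Fintype.sum_congr _ _ fun l => by ring
end
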